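/- Let D = {0, a, b, c} with 0 < a < c odd, b even, gcd(a,b,c) = 1, and let μ = μ_{4,D}. If 0 ∈ Λ ⊂ ℝ is an orthogonal set for μ, then Λ \ {0} ⊆ Z₁ ∪ Z₃ or Λ \ {0} ⊆ Z₂ ∪ Z₃. -/

import Mathlib

open MeasureTheory Finset Polynomial
open scoped Classical

noncomputable section

/-- The self-similar set `K(b, D)`, i.e. the attractor of the IFS
`{x ↦ (x+d)/b : d ∈ D}`, described by radix expansions. -/
def Kset (b : ℕ) (D : Finset ℤ) : Set ℝ :=
  {x : ℝ | ∃ f : ℕ → ℤ, (∀ n, f n ∈ D) ∧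
    HasSum (fun n : ℕ => (f n : ℝ) / (b : ℝ) ^ (n + 1)) x}

/-- `J` is a tiling set for `K`: translates of `K` by `J` cover `ℝ` up to a null
set and overlap in null sets. -/
def IsTilingSet (J K : Set ℝ) : Prop :=
  J.Countable ∧
  volume ((⋃ t ∈ J, (fun x : ℝ => x + t) '' K)ᶜ) = 0 ∧
  ∀ t₁ ∈ J, ∀ t₂ ∈ J, t₁ ≠ t₂ →
    volume (((fun x : ℝ => x + t₁) '' K) ∩ ((fun x : ℝ => x + t₂) '' K)) = 0

def IsTile (K : Set ℝ) : Prop := ∃ J : Set ℝ, IsTilingSet J K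

/-- The exponential `e_λ(x) = exp(2πiλx)`. -/
def expChar (lam x : ℝ) : ℂ :=
  Complex.exp (2 * (Real.pi : ℂ) * Complex.I * (lam : ℂ) * (x : ℂ))

/-- The exponentials indexed by `Λ` are pairwise orthogonal in `L²(μ)`. -/
def IsOrthogonalSetFor (Λ : Set ℝ) (μ : Measure ℝ) : Prop :=
  ∀ l₁ ∈ Λ, ∀ l₂ ∈ Λ, l₁ ≠ l₂ →
    ∫ x : ℝ, expChar l₁ x * (starRingEnd ℂ) (expChar l₂ x) ∂μ = 0

/-- `Λ` is a spectrum of the measure `μ`: `0 ∈ Λ`, the exponentials `e_λ, λ ∈ Λ`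
are pairwise orthogonal in `L²(μ)`, and their span is dense in `L²(μ)`
(equivalently, only the zero element of `L²(μ)` is orthogonal to all of them). -/
def IsSpectrumOfMeasure (Λ : Set ℝ) (μ : Measure ℝ) : Prop :=
  Λ.Countable ∧ (0 : ℝ) ∈ Λ ∧ IsOrthogonalSetFor Λ μ ∧
  ∀ f : ℝ → ℂ, MemLp f 2 μ →
    (∀ lam ∈ Λ, ∫ x : ℝ, f x * (starRingEnd ℂ) (expChar lam x) ∂μ = 0) →
    f =ᵐ[μ] 0

/-- A set of positive finite Lebesgue measure is spectral if `L²(K)` admits an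
orthogonal family of exponentials spanning a dense subspace. -/
def IsSpectralSet (K : Set ℝ) : Prop :=
  ∃ Λ : Set ℝ, IsSpectrumOfMeasure Λ (volume.restrict K)

/-- `Γ` is a spectrum of the finite set `A ⊂ ℤ` (w.r.t. the normalized counting
measure on `A`): `#Γ = #A` and the exponentials are pairwise orthogonal. -/
def IsSpectrumOfIntFinset (Γ : Finset ℝ) (A : Finset ℤ) : Prop :=
  Γ.card = A.card ∧
  ∀ l₁ ∈ Γ, ∀ l₂ ∈ Γ, l₁ ≠ l₂ →
    ∑ a ∈ A, Complex.exp (2 * (Real.pi : ℂ) * Complex.I * ((l₁ - l₂ : ℝ) : ℂ) * (a : ℂ)) = 0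

def IsSpectralIntFinset (A : Finset ℤ) : Prop :=
  ∃ Γ : Finset ℝ, IsSpectrumOfIntFinset Γ A

/-- `μ` is the self-similar measure of the pair `(b, D)`. -/
def IsSelfSimilarMeasure (b : ℕ) (D : Finset ℤ) (μ : Measure ℝ) : Prop :=
  IsProbabilityMeasure μ ∧
  μ = (D.card : ENNReal)⁻¹ • ∑ d ∈ D, Measure.map (fun x : ℝ => (x + (d : ℝ)) / (b : ℝ)) μ

/-- `A` is an integer tile: `A ⊕ B ≡ ℤ_n (mod n)` for some `n` and finite `B`. -/
def IsIntegerTile (A : Finset ℤ) : Prop :=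
  ∃ n : ℕ, 0 < n ∧ ∃ B : Finset ℤ,
    ∀ r : ZMod n, ∃! p : ℤ × ℤ, p.1 ∈ A ∧ p.2 ∈ B ∧ ((p.1 + p.2 : ℤ) : ZMod n) = r

/-- The sumset `E 0 + E 1 + ⋯ + E k`. -/
def famSum (k : ℕ) (E : ℕ → Finset ℤ) : Finset ℤ :=
  (Fintype.piFinset fun i : Fin (k + 1) => E i.val).image fun f => ∑ i, f i

/-- The sum `E 0 ⊕ E 1 ⊕ ⋯ ⊕ E k` is direct: all sums are distinct. -/
def FamilyUniqueSums (k : ℕ) (E : ℕ → Finset ℤ) : Prop :=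
  ∀ f g : Fin (k + 1) → ℤ, (∀ i, f i ∈ E i.val) → (∀ i, g i ∈ E i.val) →
    ∑ i, f i = ∑ i, g i → f = g

/-- `F` is a complete residue system modulo `b`. -/
def IsCompleteResidueSystem (b : ℕ) (F : Finset ℤ) : Prop :=
  ∀ r : ZMod b, ∃! x, x ∈ F ∧ (x : ZMod b) = r

/-- The product-form digit set `D = E₀ + b^{ℓ₁}E₁ + ⋯ + b^{ℓ_k}E_k` (with `ℓ 0 = 0`). -/
def Dprod (b k : ℕ) (E : ℕ → Finset ℤ) (ℓ : ℕ → ℕ) : Finset ℤ :=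
  (Fintype.piFinset fun i : Fin (k + 1) => E i.val).image
    fun f => ∑ i, (b : ℤ) ^ (ℓ i.val) * f i

/-- The sum defining the product form is direct. -/
def ProdFormDirect (b k : ℕ) (E : ℕ → Finset ℤ) (ℓ : ℕ → ℕ) : Prop :=
  ∀ f g : Fin (k + 1) → ℤ, (∀ i, f i ∈ E i.val) → (∀ i, g i ∈ E i.val) →
    ∑ i, (b : ℤ) ^ (ℓ i.val) * f i = ∑ i, (b : ℤ) ^ (ℓ i.val) * g i → f = g

/-- The set `A = ⊕_{i} ⊕_{j=0}^{ℓ_i - 1} b^j E_i` (the `i = 0` term is void when `ℓ 0 = 0`). -/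
def Aset (b k : ℕ) (E : ℕ → Finset ℤ) (ℓ : ℕ → ℕ) : Finset ℤ :=
  (Fintype.piFinset fun q : Σ i : Fin (k + 1), Fin (ℓ i.val) => E q.1.val).image
    fun f => ∑ q : Σ i : Fin (k + 1), Fin (ℓ i.val), (b : ℤ) ^ (q.2 : ℕ) * f q

/-- Mask polynomial `P_F(x) = ∑_{d ∈ F} x^d` of a finite set of nonnegative integers. -/
def maskPoly (F : Finset ℤ) : Polynomial ℤ := ∑ d ∈ F, Polynomial.X ^ d.toNat

/-- `Ψ(x) = ∏_{d ∈ S} Φ_d(x)` where `S = {d > 1 : d ∣ b, Φ_d ∣ P_F}`. -/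
def PsiPoly (b : ℕ) (F : Finset ℤ) : Polynomial ℤ :=
  ∏ d ∈ b.divisors.filter (fun d => 1 < d ∧ cyclotomic d ℤ ∣ maskPoly F), cyclotomic d ℤ

/-- `K_D^{(i)}(x) = Ψ₀(x)Ψ₁(x^{b^{ℓ₁}}) ⋯ Ψ_i(x^{b^{ℓ_i}})`. -/
def Kpoly (b : ℕ) (E : ℕ → Finset ℤ) (ℓ : ℕ → ℕ) (i : ℕ) : Polynomial ℤ :=
  ∏ j ∈ Finset.range (i + 1), Polynomial.expand ℤ (b ^ (ℓ j)) (PsiPoly b (E j))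

/-- `nIdx Q = lcm {s ≥ 1 : Φ_s ∣ Q}` (any `s` with `Φ_s ∣ Q` satisfies
`φ(s) ≤ deg Q`, hence `s ≤ 2 (deg Q + 1)²`, so the range is exhaustive). -/
def nIdx (Q : Polynomial ℤ) : ℕ :=
  ((Finset.Icc 1 (2 * (Q.natDegree + 1) ^ 2)).filter fun s => cyclotomic s ℤ ∣ Q).lcm id

/-- `F' ≡ F (mod n)`: each element of `F` is changed by some integer multiple of `n`
(keeping the elements distinct). -/
def ModSet (n : ℕ) (F F' : Finset ℤ) : Prop :=
  ∃ g : ℤ → ℤ, F' = F.image g ∧ (∀ x ∈ F, (n : ℤ) ∣ g x - x) ∧ F'.card = F.card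

/-- The sumset `Dprev + b^{ℓi} Ei`. -/
def stepSum (b : ℕ) (ℓi : ℕ) (Dprev Ei : Finset ℤ) : Finset ℤ :=
  (Dprev ×ˢ Ei).image fun p => p.1 + (b : ℤ) ^ ℓi * p.2

/-- The sum `Dprev ⊕ b^{ℓi} Ei` is direct. -/
def StepDirect (b : ℕ) (ℓi : ℕ) (Dprev Ei : Finset ℤ) : Prop :=
  ∀ d₁ ∈ Dprev, ∀ e₁ ∈ Ei, ∀ d₂ ∈ Dprev, ∀ e₂ ∈ Ei,
    d₁ + (b : ℤ) ^ ℓi * e₁ = d₂ + (b : ℤ) ^ ℓi * e₂ → d₁ = d₂ ∧ e₁ = e₂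

/-- `Dseq` is the sequence `D^{(0)}, …, D^{(k)}` of the modulo product-form
construction for `E₀ ⊕ ⋯ ⊕ E_k = ℤ_b` and `0 = ℓ₀ ≤ ℓ₁ ≤ ⋯ ≤ ℓ_k`:
`D^{(0)} ≡ E₀ (mod n₀)` and `D^{(i)} ≡ D^{(i-1)} ⊕ b^{ℓ_i}E_i (mod n_i)`. -/
def IsModuloProductForm (b k : ℕ) (E : ℕ → Finset ℤ) (ℓ : ℕ → ℕ)
    (Dseq : ℕ → Finset ℤ) : Prop :=
  famSum k E = (Finset.range b).image (fun j => (j : ℤ)) ∧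
  FamilyUniqueSums k E ∧
  ℓ 0 = 0 ∧ (∀ i j, i ≤ j → j ≤ k → ℓ i ≤ ℓ j) ∧
  ModSet (nIdx (Kpoly b E ℓ 0)) (E 0) (Dseq 0) ∧
  ∀ i, 1 ≤ i → i ≤ k →
    StepDirect b (ℓ i) (Dseq (i - 1)) (E i) ∧
    ModSet (nIdx (Kpoly b E ℓ i)) (stepSum b (ℓ i) (Dseq (i - 1)) (E i)) (Dseq i)

/-- The double sum `⊕_{i=0}^{k-1} ⊕_{j=t_i}^{t_{i+1}-1} b^j F(k-i-1)`. -/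
def doubleSum (b k : ℕ) (t : ℕ → ℕ) (F : ℕ → Finset ℤ) : Finset ℤ :=
  (Fintype.piFinset
      (fun q : Σ i : Fin k, {j : ℕ // j ∈ Finset.Ico (t i.val) (t (i.val + 1))} =>
        F (k - q.1.val - 1))).image
    fun f => ∑ q : Σ i : Fin k, {j : ℕ // j ∈ Finset.Ico (t i.val) (t (i.val + 1))},
      (b : ℤ) ^ (q.2.val) * f q

/-- `𝒞_i = p̃_{i-1}·{0, 1, …, p_i − 1}` where `p̃_{i-1} = p₀⋯p_{i-1}`. -/
def Cset (p : ℕ → ℕ) (i : ℕ) : Finset ℤ :=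
  (Finset.range (p i)).image fun j => (∏ l ∈ Finset.range i, (p l : ℤ)) * j

/-- The set of zeros of `ξ ↦ 1 + e^{2πiaξ} + e^{2πibξ} + e^{2πicξ}`. -/
def maskZeroSet (a b c : ℤ) : Set ℝ :=
  {ξ : ℝ | (1 : ℂ) + Complex.exp (2 * (Real.pi : ℂ) * Complex.I * (a : ℂ) * (ξ : ℂ))
      + Complex.exp (2 * (Real.pi : ℂ) * Complex.I * (b : ℂ) * (ξ : ℂ))
      + Complex.exp (2 * (Real.pi : ℂ) * Complex.I * (c : ℂ) * (ξ : ℂ)) = 0}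

/-- `(1/q)𝕆 = {m/q : m odd}`. -/
def oddFracSet (q : ℝ) : Set ℝ := {x | ∃ m : ℤ, Odd m ∧ x = (m : ℝ) / q}

/-- `⋃_{n ≥ 1} 4^n (1/q)𝕆`. -/
def Zsc (q : ℝ) : Set ℝ :=
  {x | ∃ n : ℕ, 1 ≤ n ∧ ∃ m : ℤ, Odd m ∧ x = (4 : ℝ) ^ n * (m : ℝ) / q}

/-!
By self-similarity the Fourier transform satisfies `μ̂(ξ) = ¼ M(ξ/4) μ̂(ξ/4)` with
`M(ξ) = 1 + e(aξ) + e(bξ) + e(cξ)`, and `μ̂(ξ/4ⁿ) → μ̂(0) = 1`; so every zero of `μ̂` is `4ⁿ`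
times a zero of `M` for some `n ≥ 1`. Four unit vectors summing to zero cancel in pairs, and each
pairing (`e(aξ) = e((c-b)ξ) = -1`, etc.) pins `ξ` down by Bézout to `R₁`, `R₂` or `R₃`. Hence
`Λ \ {0}` and all differences within `Λ` lie in `Z₁ ∪ Z₂ ∪ Z₃`. Finally, points `x ∈ Z₁ \ Z₂` and
`y ∈ Z₂ \ Z₁` cannot both lie in `Λ`: the `pᵢ` are odd and `p₁` is coprime to `p₂` and `p₃`, so if
`x - y ∈ Z₂ ∪ Z₃` then `x = (x - y) + y` has a denominator prime to `p₁`, forcing `x ∈ Z₂`, and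
if `x - y ∈ Z₁` then symmetrically `y ∈ Z₁`.
-/

open Complex ComplexConjugate Filter Topology

lemma expChar_zero_left (x : ℝ) : expChar 0 x = 1 := by simp [expChar]

lemma norm_expChar (l x : ℝ) : ‖expChar l x‖ = 1 := by
  rw [expChar, show 2 * (Real.pi : ℂ) * I * l * x = ((2 * Real.pi * l * x : ℝ) : ℂ) * I by
    push_cast; ring]
  exact norm_exp_ofReal_mul_I _

lemma expChar_sub_left (l₁ l₂ x : ℝ) : expChar (l₁ - l₂) x = expChar l₁ x / expChar l₂ x := by
  rw [expChar, expChar, expChar, ← Complex.exp_sub]; push_cast; ring_nf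

lemma expChar_mul_conj (l₁ l₂ x : ℝ) :
    expChar l₁ x * conj (expChar l₂ x) = expChar (l₁ - l₂) x := by
  rw [expChar, expChar, expChar, ← Complex.exp_conj, ← Complex.exp_add]
  simp only [map_mul, conj_I, conj_ofReal, map_ofNat]
  push_cast; ring_nf

lemma integral_expChar (μ : Measure ℝ) (l : ℝ) :
    ∫ x, expChar l x ∂μ = charFun μ (2 * Real.pi * l) := by
  rw [charFun_apply_real]
  congr 1 with x
  rw [expChar]; push_cast; ring_nf

lemma integrable_expChar (μ : Measure ℝ) [IsFiniteMeasure μ] (l : ℝ) :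
    Integrable (expChar l) μ :=
  (integrable_const (1 : ℝ)).mono' (by unfold expChar; fun_prop)
    (ae_of_all _ fun x => (norm_expChar l x).le)

lemma IsSelfSimilarMeasure.charFun_two_pi_mul {b : ℕ} {D : Finset ℤ} {μ : Measure ℝ}
    (hμ : IsSelfSimilarMeasure b D μ) (ξ : ℝ) :
    charFun μ (2 * Real.pi * ξ) =
      (D.card : ℂ)⁻¹ * (∑ d ∈ D, expChar d (ξ / b)) * charFun μ (2 * Real.pi * (ξ / b)) := by
  have := hμ.1
  have hmap (d : ℤ) : ∫ x, expChar ξ x ∂μ.map (fun x : ℝ => (x + d) / b) =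
      expChar d (ξ / b) * ∫ x, expChar (ξ / b) x ∂μ := by
    rw [integral_map (by fun_prop) (by unfold expChar; fun_prop), ← integral_const_mul]
    congr 1 with x
    rw [expChar, expChar, expChar, ← Complex.exp_add]; push_cast; ring_nf
  rw [← integral_expChar, ← integral_expChar]
  conv_lhs => rw [hμ.2]
  rw [integral_smul_measure, integral_finsetSum_measure]
  · rw [Finset.sum_congr rfl fun d _ => hmap d, ← Finset.sum_mul, ENNReal.toReal_inv,
      ENNReal.toReal_natCast, Complex.real_smul]
    push_cast
    ring
  · exact fun d _ => integrable_expChar _ ξ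

lemma IsSelfSimilarMeasure.exists_sum_expChar_eq_zero {b : ℕ} {D : Finset ℤ} {μ : Measure ℝ}
    (hμ : IsSelfSimilarMeasure b D μ) (hb : 1 < b) (hD : D.Nonempty) {ξ : ℝ}
    (hξ : charFun μ (2 * Real.pi * ξ) = 0) :
    ∃ n ≥ 1, ∑ d ∈ D, expChar d (ξ / b ^ n) = 0 := by
  have := hμ.1
  by_contra! hmask
  have hzero (n : ℕ) : charFun μ (2 * Real.pi * (ξ / b ^ n)) = 0 := by
    induction n with
    | zero => simpa using hξ
    | succ n ih =>
      have h := hμ.charFun_two_pi_mul (ξ / b ^ n)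
      rw [ih, div_div, ← pow_succ] at h
      have hcard : (D.card : ℂ)⁻¹ ≠ 0 := by simpa using hD.card_pos.ne'
      simpa [hcard, hmask (n + 1) (by omega)] using h.symm
  have hlim : Tendsto (fun n : ℕ => charFun μ (2 * Real.pi * (ξ / b ^ n))) atTop (𝓝 1) := by
    have hdiv : Tendsto (fun n : ℕ => ξ / (b : ℝ) ^ n) atTop (𝓝 0) :=
      tendsto_const_nhds.div_atTop (tendsto_pow_atTop_atTop_of_one_lt (by exact_mod_cast hb))
    simpa [Function.comp_def] using
      ((continuous_charFun (μ := μ)).tendsto _).comp (hdiv.const_mul (2 * Real.pi))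
  simp only [hzero] at hlim
  exact zero_ne_one (tendsto_nhds_unique tendsto_const_nhds hlim)

lemma eq_neg_one_of_one_add_add_add_eq_zero {z₁ z₂ z₃ : ℂ} (h₁ : ‖z₁‖ = 1) (h₂ : ‖z₂‖ = 1)
    (h₃ : ‖z₃‖ = 1) (hsum : 1 + z₁ + z₂ + z₃ = 0) : z₁ = -1 ∨ z₂ = -1 ∨ z₃ = -1 := by
  have hinv {z : ℂ} (hz : ‖z‖ = 1) : z * conj z = 1 := by
    rw [mul_conj, normSq_eq_norm_sq, hz]; norm_num
  have hconj : 1 + conj z₁ + conj z₂ + conj z₃ = 0 := by simpa using congrArg conj hsum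
  -- as `conj zᵢ = zᵢ⁻¹`, the conjugate relation times `z₁ z₂ z₃` reads
  -- `z₂ z₃ + z₁ z₃ + z₁ z₂ + z₁ z₂ z₃ = 0`
  have hprod : (1 + z₁) * (1 + z₂) * (1 + z₃) = 0 := by
    linear_combination hsum + z₁ * z₂ * z₃ * hconj - z₂ * z₃ * hinv h₁ - z₁ * z₃ * hinv h₂ -
      z₁ * z₂ * hinv h₃
  rcases mul_eq_zero.1 hprod with h | h
  · rcases mul_eq_zero.1 h with h | h
    · exact Or.inl (eq_neg_of_add_eq_zero_right h)
    · exact Or.inr (Or.inl (eq_neg_of_add_eq_zero_right h))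
  · exact Or.inr (Or.inr (eq_neg_of_add_eq_zero_right h))

lemma expChar_eq_neg_one_iff (l x : ℝ) : expChar l x = -1 ↔ l * x ∈ oddFracSet 2 := by
  have hπ : (Real.pi : ℂ) * I ≠ 0 := by simp [Real.pi_ne_zero]
  constructor
  · intro h
    have h1 : cexp (2 * Real.pi * I * l * x - Real.pi * I) = 1 := by
      rw [Complex.exp_sub, ← expChar, h, exp_pi_mul_I]; norm_num
    obtain ⟨n, hn⟩ := exp_eq_one_iff.1 h1
    have h2 : ((2 * (l * x) - 1 - 2 * n : ℝ) : ℂ) * (Real.pi * I) = 0 := by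
      push_cast; linear_combination hn
    have h3 := ofReal_eq_zero.1 ((mul_eq_zero.1 h2).resolve_right hπ)
    exact ⟨2 * n + 1, odd_two_mul_add_one n, by push_cast; linarith⟩
  · rintro ⟨_, ⟨n, rfl⟩, h⟩
    have h' : (l : ℂ) * x = (2 * n + 1) / 2 := by exact_mod_cast congrArg ofReal h
    rw [expChar, show 2 * (Real.pi : ℂ) * I * l * x = n * (2 * Real.pi * I) + Real.pi * I by
      linear_combination 2 * Real.pi * I * h', Complex.exp_add, exp_int_mul_two_pi_mul_I,
      exp_pi_mul_I, one_mul]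

lemma expChar_mul_left (r l x : ℝ) : expChar (r * l) x = expChar l (r * x) := by
  simp only [expChar]; push_cast; ring_nf

lemma expChar_sub_eq_neg_one {l₁ l₂ x : ℝ} (h : expChar l₁ x + expChar l₂ x = 0) :
    expChar (l₁ - l₂) x = -1 := by
  rw [expChar_sub_left, eq_neg_of_add_eq_zero_left h, neg_div,
    div_self (show expChar l₂ x ≠ 0 from Complex.exp_ne_zero _)]

lemma mul_mem_oddFracSet_iff {n x q : ℝ} (hn : n ≠ 0) :
    n * x ∈ oddFracSet q ↔ x ∈ oddFracSet (q * n) := by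
  simp only [oddFracSet, Set.mem_ofPred_eq, ← div_div, eq_div_iff hn, mul_comm x]

lemma gcd_mul_mem_oddFracSet {u v : ℤ} {x q : ℝ} (hq : q ≠ 0) (hu : u * x ∈ oddFracSet q)
    (hv : v * x ∈ oddFracSet q) : (Int.gcd u v : ℝ) * x ∈ oddFracSet q := by
  obtain ⟨A, hA, hAx⟩ := hu
  obtain ⟨B, -, hBx⟩ := hv
  set m := u.gcdA v * A + u.gcdB v * B
  have hm : (Int.gcd u v : ℝ) * x = m / q := by
    have hg : (Int.gcd u v : ℝ) = u * u.gcdA v + v * u.gcdB v := by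
      exact_mod_cast Int.gcd_eq_gcd_ab u v
    rw [hg]; push_cast [m]
    linear_combination (u.gcdA v : ℝ) * hAx + (u.gcdB v : ℝ) * hBx
  obtain ⟨u', hu'⟩ := Int.gcd_dvd_left u v
  have hAm : A = u' * m := by
    have : (A : ℝ) / q = (u' * m : ℤ) / q := by
      rw [← hAx, hu']; push_cast; rw [mul_div_assoc, ← hm]; ring
    exact_mod_cast (div_left_inj' hq).1 this
  exact ⟨m, Int.Odd.of_mul_right (hAm ▸ hA), hm⟩

lemma mem_oddFracSet_two_mul_gcd {u v : ℤ} (hu : Odd u) {ξ : ℝ} (h₁ : expChar u ξ = -1)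
    (h₂ : expChar v ξ = -1) : ξ ∈ oddFracSet (2 * Int.gcd u v) := by
  have hg : (Int.gcd u v : ℝ) ≠ 0 := by
    have : u ≠ 0 := by rintro rfl; simp at hu
    exact_mod_cast (Int.gcd_pos_of_ne_zero_left v this).ne'
  exact (mul_mem_oddFracSet_iff hg).1 <| gcd_mul_mem_oddFracSet two_ne_zero
    ((expChar_eq_neg_one_iff _ _).1 h₁) ((expChar_eq_neg_one_iff _ _).1 h₂)

lemma le_of_mul_two_pow_eq_odd_mul_two_pow {x y : ℤ} {i j : ℕ} (hy : Odd y)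
    (h : x * 2 ^ i = y * 2 ^ j) : i ≤ j := by
  by_contra! hji
  have : 2 ^ j * 2 ∣ 2 ^ j * y := by
    rw [← pow_succ, mul_comm, ← h]
    exact (pow_dvd_pow 2 hji).mul_left x
  exact Int.not_even_iff_odd.2 hy
    (even_iff_two_dvd.2 ((mul_dvd_mul_iff_left (by positivity)).1 this))

lemma eq_of_odd_mul_two_pow_eq {x y : ℤ} {i j : ℕ} (hx : Odd x) (hy : Odd y)
    (h : x * 2 ^ i = y * 2 ^ j) : i = j :=
  le_antisymm (le_of_mul_two_pow_eq_odd_mul_two_pow hy h)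
    (le_of_mul_two_pow_eq_odd_mul_two_pow hx h.symm)

lemma mem_Zsc_of_div_pow_mem_oddFracSet {q x : ℝ} {n : ℕ} (hn : 1 ≤ n)
    (hx : x / 4 ^ n ∈ oddFracSet q) : x ∈ Zsc q := by
  obtain ⟨m, hm, h⟩ := hx
  exact ⟨n, hn, m, hm, by rw [mul_div_assoc, ← h]; field_simp⟩

def HasCoprimeDenom (p : ℤ) (x : ℝ) : Prop := ∃ k z : ℤ, IsCoprime k p ∧ x * k = z

namespace HasCoprimeDenom

variable {p : ℤ} {x y : ℝ}

lemma add (hx : HasCoprimeDenom p x) (hy : HasCoprimeDenom p y) : HasCoprimeDenom p (x + y) := by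
  obtain ⟨k₁, z₁, hk₁, h₁⟩ := hx
  obtain ⟨k₂, z₂, hk₂, h₂⟩ := hy
  refine ⟨k₁ * k₂, z₁ * k₂ + z₂ * k₁, hk₁.mul_left hk₂, ?_⟩
  push_cast
  linear_combination (k₂ : ℝ) * h₁ + (k₁ : ℝ) * h₂

lemma sub (hx : HasCoprimeDenom p x) (hy : HasCoprimeDenom p y) : HasCoprimeDenom p (x - y) := by
  obtain ⟨k₁, z₁, hk₁, h₁⟩ := hx
  obtain ⟨k₂, z₂, hk₂, h₂⟩ := hy
  refine ⟨k₁ * k₂, z₁ * k₂ - z₂ * k₁, hk₁.mul_left hk₂, ?_⟩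
  push_cast
  linear_combination (k₂ : ℝ) * h₁ - (k₁ : ℝ) * h₂

end HasCoprimeDenom

lemma hasCoprimeDenom_of_mem_Zsc {p q : ℤ} (hqp : IsCoprime q p) {x : ℝ} (hx : x ∈ Zsc q) :
    HasCoprimeDenom p x := by
  obtain ⟨n, -, m, -, rfl⟩ := hx
  rcases eq_or_ne q 0 with rfl | hq
  · exact ⟨0, 0, hqp, by simp⟩
  · exact ⟨q, 4 ^ n * m, hqp, by push_cast; field_simp⟩

lemma hasCoprimeDenom_of_mem_Zsc_two_mul {p p' : ℕ} (hp' : Odd p') (hpp' : IsCoprime (p : ℤ) p')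
    {x : ℝ} (hx : x ∈ Zsc (2 * p)) : HasCoprimeDenom p' x :=
  hasCoprimeDenom_of_mem_Zsc (q := 2 * p)
    ((Int.isCoprime_two_left.2 ((Int.odd_coe_nat p').2 hp')).mul_left hpp')
    (by push_cast; exact hx)

/-- Writing `x = 4ⁿ m / (2p)`, the coprime denominator forces `p ∣ m`, so `x = 4ⁿ m' / 2`. -/
lemma mem_Zsc_two_mul_of_hasCoprimeDenom {p p' : ℕ} (hp : Odd p) (hp' : Odd p') {x : ℝ}
    (hx : x ∈ Zsc (2 * p)) (hd : HasCoprimeDenom p x) : x ∈ Zsc (2 * p') := by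
  obtain ⟨n, hn, m, hm, rfl⟩ := hx
  obtain ⟨k, z, hk, hz⟩ := hd
  have hp0 : (p : ℝ) ≠ 0 := by exact_mod_cast hp.pos.ne'
  have hint : (4 : ℤ) ^ n * m * k = 2 * p * z := by
    have : ((4 ^ n * m * k : ℤ) : ℝ) = (2 * p * z : ℤ) := by
      push_cast; rw [← hz]; field_simp
    exact_mod_cast this
  have hpodd : Odd (p : ℤ) := (Int.odd_coe_nat p).2 hp
  have h4p : IsCoprime ((4 : ℤ) ^ n) p := by
    rw [show (4 : ℤ) ^ n = 2 ^ (2 * n) by rw [pow_mul]; norm_num]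
    exact (Int.isCoprime_two_left.2 hpodd).pow_left
  obtain ⟨m', rfl⟩ : (p : ℤ) ∣ m :=
    (h4p.mul_left hk).symm.dvd_of_dvd_mul_right ⟨2 * z, by linear_combination hint⟩
  refine ⟨n, hn, m' * p', (Int.Odd.of_mul_right hm).mul ((Int.odd_coe_nat p').2 hp'), ?_⟩
  have hp'0 : (p' : ℝ) ≠ 0 := by exact_mod_cast hp'.pos.ne'
  push_cast; field_simp

lemma mem_Zsc_or_mem_Zsc_of_sub_mem {p₁ p₂ : ℕ} (hp₁ : Odd p₁) (hp₂ : Odd p₂)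
    (h₁₂ : IsCoprime (p₁ : ℤ) p₂) {q : ℤ} (hq : IsCoprime q p₁) {x y : ℝ}
    (hx : x ∈ Zsc (2 * p₁)) (hy : y ∈ Zsc (2 * p₂))
    (hxy : x - y ∈ Zsc (2 * p₁) ∪ Zsc (2 * p₂) ∪ Zsc q) :
    x ∈ Zsc (2 * p₂) ∨ y ∈ Zsc (2 * p₁) := by
  have hy₁ : HasCoprimeDenom p₁ y := hasCoprimeDenom_of_mem_Zsc_two_mul hp₁ h₁₂.symm hy
  have hx₁ (hd : HasCoprimeDenom p₁ (x - y)) : x ∈ Zsc (2 * p₂) :=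
    mem_Zsc_two_mul_of_hasCoprimeDenom hp₁ hp₂ hx (by simpa using hd.add hy₁)
  rcases hxy with (h | h) | h
  · have hd := (hasCoprimeDenom_of_mem_Zsc_two_mul hp₂ h₁₂ hx).sub
      (hasCoprimeDenom_of_mem_Zsc_two_mul hp₂ h₁₂ h)
    exact Or.inr (mem_Zsc_two_mul_of_hasCoprimeDenom hp₂ hp₁ hy (by simpa using hd))
  · exact Or.inl (hx₁ (hasCoprimeDenom_of_mem_Zsc_two_mul hp₁ h₁₂.symm h))
  · exact Or.inl (hx₁ (hasCoprimeDenom_of_mem_Zsc hq h))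

lemma subset_union_or_subset_union_of_sub_mem {α : Type*} [Sub α] {L Z₁ Z₂ Z₃ : Set α}
    (hL : L ⊆ Z₁ ∪ Z₂ ∪ Z₃) (hsub : ∀ x ∈ L, ∀ y ∈ L, x ≠ y → x - y ∈ Z₁ ∪ Z₂ ∪ Z₃)
    (hsep : ∀ x ∈ Z₁, ∀ y ∈ Z₂, x - y ∈ Z₁ ∪ Z₂ ∪ Z₃ → x ∈ Z₂ ∨ y ∈ Z₁) :
    L ⊆ Z₁ ∪ Z₃ ∨ L ⊆ Z₂ ∪ Z₃ := by
  by_contra! h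
  obtain ⟨⟨y, hyL, hy⟩, ⟨x, hxL, hx⟩⟩ := And.intro (Set.not_subset.1 h.1) (Set.not_subset.1 h.2)
  have hx₁ : x ∈ Z₁ := by have := hL hxL; simp_all
  have hy₂ : y ∈ Z₂ := by have := hL hyL; simp_all
  have hxy : x ≠ y := by rintro rfl; simp_all
  rcases hsep x hx₁ y hy₂ (hsub x hxL y hyL hxy) with h | h <;> simp_all

lemma IsOrthogonalSetFor.charFun_sub_eq_zero {Λ : Set ℝ} {μ : Measure ℝ}
    (h : IsOrthogonalSetFor Λ μ) {x y : ℝ} (hx : x ∈ Λ) (hy : y ∈ Λ) (hxy : x ≠ y) :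
    charFun μ (2 * Real.pi * (x - y)) = 0 := by
  rw [← integral_expChar, ← h x hx y hy hxy]
  simp only [expChar_mul_conj]

lemma isCoprime_of_forall_dvd {a b c x y : ℤ} (habc : Int.gcd a (Int.gcd b c) = 1)
    (h : ∀ d : ℤ, d ∣ x → d ∣ y → d ∣ a ∧ d ∣ b ∧ d ∣ c) : IsCoprime x y := by
  obtain ⟨ha, hb, hc⟩ := h _ (Int.gcd_dvd_left x y) (Int.gcd_dvd_right x y)
  have := Int.dvd_gcd ha (Int.dvd_coe_gcd hb hc)
  rwa [habc, Nat.dvd_one, ← Int.isCoprime_iff_gcd_eq_one] at this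

lemma odd_gcd_of_odd_left {u : ℤ} (hu : Odd u) (v : ℤ) : Odd (Int.gcd u v) :=
  hu.natAbs.of_dvd_nat (Int.gcd_dvd_natAbs_left u v)

section Digits

variable {a b c : ℤ} {t t' : ℕ} {l l' : ℤ}

lemma mem_maskZeroSet_iff {ξ : ℝ} :
    ξ ∈ maskZeroSet a b c ↔ 1 + expChar a ξ + expChar b ξ + expChar c ξ = 0 := by
  simp [maskZeroSet, expChar]

lemma sum_expChar_digits (ha : Odd a) (hc : Odd c) (hb : Even b) (hb0 : b ≠ 0) (hac : a ≠ c)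
    (ξ : ℝ) :
    ∑ d ∈ ({0, a, b, c} : Finset ℤ), expChar d ξ =
      1 + expChar a ξ + expChar b ξ + expChar c ξ := by
  have hab : a ≠ b := by rintro rfl; exact Int.not_even_iff_odd.2 ha hb
  have hcb : c ≠ b := by rintro rfl; exact Int.not_even_iff_odd.2 hc hb
  have ha0 : (0 : ℤ) ≠ a := by rintro rfl; simp at ha
  have hc0 : (0 : ℤ) ≠ c := by rintro rfl; simp at hc
  rw [sum_insert (by simp [ha0, hb0.symm, hc0]), sum_insert (by simp [hab, hac]),
    sum_insert (by simp [hcb.symm]), sum_singleton]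
  simp [expChar_zero_left, add_assoc]

lemma maskZeroSet_subset (ha : Odd a) (hc : Odd c) (hl : Odd l)
    (hl' : Odd l') (hbe : b = 2 ^ t * l) (hcae : c - a = 2 ^ t' * l') :
    maskZeroSet a b c ⊆ oddFracSet (2 * Int.gcd a (c - b)) ∪
      oddFracSet (2 * Int.gcd c (b - a)) ∪ oddFracSet (2 ^ (t + 1) * Int.gcd l l') := by
  intro ξ hξ
  have hsum := mem_maskZeroSet_iff.1 hξ
  rcases eq_neg_one_of_one_add_add_add_eq_zero (norm_expChar _ _) (norm_expChar _ _)
    (norm_expChar _ _) hsum with h | h | h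
  · have hcb : expChar (c - b : ℤ) ξ = -1 := by
      push_cast; exact expChar_sub_eq_neg_one (by linear_combination hsum - h)
    exact Or.inl (Or.inl (mem_oddFracSet_two_mul_gcd ha h hcb))
  · have hca : expChar (c - a) ξ = -1 := expChar_sub_eq_neg_one (by linear_combination hsum - h)
    obtain ⟨A, hA, hAξ⟩ := (expChar_eq_neg_one_iff _ _).1 h
    obtain ⟨B, hB, hBξ⟩ := (expChar_eq_neg_one_iff _ _).1 hca
    -- `2bξ = A` and `2(c - a)ξ = B` are odd, so `b` and `c - a` have the same `2`-adic valuation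
    have htt : t' = t := by
      have : ((A * l' * 2 ^ t' : ℤ) : ℝ) = (B * l * 2 ^ t : ℤ) := by
        push_cast
        rw [mul_assoc, mul_assoc, mul_comm (l' : ℝ), mul_comm (l : ℝ)]
        rw [show (2 : ℝ) ^ t' * l' = c - a by exact_mod_cast hcae.symm,
          show (2 : ℝ) ^ t * l = b by exact_mod_cast hbe.symm]
        linear_combination -2 * (c - a : ℝ) * hAξ + 2 * b * hBξ
      exact eq_of_odd_mul_two_pow_eq (hA.mul hl') (hB.mul hl) (by exact_mod_cast this)
    subst htt
    have hξ' : 2 ^ t' * ξ ∈ oddFracSet (2 * Int.gcd l l') := by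
      refine mem_oddFracSet_two_mul_gcd hl ?_ ?_
      · rw [← h, hbe, Int.cast_mul, Int.cast_pow, Int.cast_ofNat, expChar_mul_left]
      · rw [← hca, show (c : ℝ) - a = 2 ^ t' * l' by exact_mod_cast hcae, expChar_mul_left]
    refine Or.inr ?_
    convert (mul_mem_oddFracSet_iff (by positivity)).1 hξ' using 2
    ring
  · have hba : expChar (b - a : ℤ) ξ = -1 := by
      push_cast; exact expChar_sub_eq_neg_one (by linear_combination hsum - h)
    exact Or.inl (Or.inr (mem_oddFracSet_two_mul_gcd hc h hba))

lemma isCoprime_gcd_sub_gcd_sub (habc : Int.gcd a (Int.gcd b c) = 1) :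
    IsCoprime (Int.gcd a (c - b) : ℤ) (Int.gcd c (b - a)) :=
  isCoprime_of_forall_dvd habc fun _ h₁ h₂ => by
    have hc := h₂.trans (Int.gcd_dvd_left _ _)
    exact ⟨h₁.trans (Int.gcd_dvd_left _ _),
      by simpa using dvd_sub hc (h₁.trans (Int.gcd_dvd_right _ _)), hc⟩

lemma isCoprime_gcd_gcd_sub (habc : Int.gcd a (Int.gcd b c) = 1) (hbe : b = 2 ^ t * l) :
    IsCoprime (Int.gcd l l' : ℤ) (Int.gcd a (c - b)) :=
  isCoprime_of_forall_dvd habc fun _ h₃ h₁ => by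
    have hb := hbe ▸ (h₃.trans (Int.gcd_dvd_left _ _)).mul_left _
    exact ⟨h₁.trans (Int.gcd_dvd_left _ _), hb,
      by simpa using dvd_add (h₁.trans (Int.gcd_dvd_right _ _)) hb⟩

lemma mem_Zsc_union_of_charFun_eq_zero (ha : Odd a) (hc : Odd c) (hb : Even b) (hb0 : b ≠ 0)
    (hac : a ≠ c) (hl : Odd l) (hl' : Odd l') (hbe : b = 2 ^ t * l) (hcae : c - a = 2 ^ t' * l')
    {μ : Measure ℝ} (hμ : IsSelfSimilarMeasure 4 {0, a, b, c} μ) {ξ : ℝ}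
    (hξ : charFun μ (2 * Real.pi * ξ) = 0) :
    ξ ∈ Zsc (2 * Int.gcd a (c - b)) ∪ Zsc (2 * Int.gcd c (b - a)) ∪
      Zsc (2 ^ (t + 1) * Int.gcd l l') := by
  obtain ⟨n, hn, hsum⟩ :=
    hμ.exists_sum_expChar_eq_zero (by norm_num) (insert_nonempty _ _) hξ
  rw [sum_expChar_digits ha hc hb hb0 hac, ← mem_maskZeroSet_iff] at hsum
  push_cast at hsum
  have hZ (q : ℝ) : ξ / 4 ^ n ∈ oddFracSet q → ξ ∈ Zsc q := mem_Zsc_of_div_pow_mem_oddFracSet hn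
  exact (maskZeroSet_subset ha hc hl hl' hbe hcae hsum).imp (Or.imp (hZ _) (hZ _)) (hZ _)

end Digits

theorem stmt15_general (a b c : ℤ) (t t' : ℕ) (l l' : ℤ)
    (hac : a < c) (haodd : Odd a) (hcodd : Odd c)
    (hbeven : Even b) (hb : 0 < b)
    (hgcd : Int.gcd a (Int.gcd b c) = 1)
    (hl : Odd l) (hl' : Odd l')
    (hbe : b = 2 ^ t * l) (hcae : c - a = 2 ^ t' * l')
    (μ : Measure ℝ) (hμ : IsSelfSimilarMeasure 4 ({0, a, b, c} : Finset ℤ) μ)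
    (Λ : Set ℝ) (h0Λ : (0 : ℝ) ∈ Λ) (horth : IsOrthogonalSetFor Λ μ) :
    Λ \ {0} ⊆ Zsc (2 * (Int.gcd a (c - b) : ℝ)) ∪ Zsc (2 ^ (t + 1) * (Int.gcd l l' : ℝ)) ∨
    Λ \ {0} ⊆ Zsc (2 * (Int.gcd c (b - a) : ℝ)) ∪ Zsc (2 ^ (t + 1) * (Int.gcd l l' : ℝ)) := by
  have hzero {ξ : ℝ} : charFun μ (2 * Real.pi * ξ) = 0 → _ :=
    mem_Zsc_union_of_charFun_eq_zero haodd hcodd hbeven hb.ne' hac.ne hl hl' hbe hcae hμ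
  have hp₁ := odd_gcd_of_odd_left haodd (c - b)
  have hq : IsCoprime (2 ^ (t + 1) * Int.gcd l l' : ℤ) (Int.gcd a (c - b)) :=
    ((Int.isCoprime_two_left.2 ((Int.odd_coe_nat _).2 hp₁)).pow_left).mul_left
      (isCoprime_gcd_gcd_sub hgcd hbe)
  refine subset_union_or_subset_union_of_sub_mem (fun x hx => hzero ?_)
    (fun x hx y hy hxy => hzero (horth.charFun_sub_eq_zero hx.1 hy.1 hxy))
    fun x hx y hy hxy => mem_Zsc_or_mem_Zsc_of_sub_mem hp₁ (odd_gcd_of_odd_left hcodd (b - a))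
      (isCoprime_gcd_sub_gcd_sub hgcd) hq hx hy (by push_cast; exact hxy)
  simpa using horth.charFun_sub_eq_zero hx.1 h0Λ hx.2

theorem stmt15 (a b c : ℤ) (t t' : ℕ) (l l' : ℤ)
    (ha : 0 < a) (hac : a < c) (haodd : Odd a) (hcodd : Odd c)
    (hbeven : Even b) (hb : 0 < b)
    (hgcd : Int.gcd a (Int.gcd b c) = 1)
    (ht : 1 ≤ t) (ht' : 1 ≤ t') (hl : Odd l) (hl' : Odd l')
    (hbe : b = 2 ^ t * l) (hcae : c - a = 2 ^ t' * l')
    (μ : Measure ℝ) (hμ : IsSelfSimilarMeasure 4 ({0, a, b, c} : Finset ℤ) μ)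
    (Λ : Set ℝ) (h0Λ : (0 : ℝ) ∈ Λ) (horth : IsOrthogonalSetFor Λ μ) :
    Λ \ {0} ⊆ Zsc (2 * (Int.gcd a (c - b) : ℝ)) ∪ Zsc (2 ^ (t + 1) * (Int.gcd l l' : ℝ)) ∨
    Λ \ {0} ⊆ Zsc (2 * (Int.gcd c (b - a) : ℝ)) ∪ Zsc (2 ^ (t + 1) * (Int.gcd l l' : ℝ)) :=
  stmt15_general a b c t t' l l' hac haodd hcodd hbeven hb hgcd hl hl' hbe hcae μ hμ Λ h0Λ horth
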